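/- arXiv:2602.00976 — 8 statements merged into one kernel-verified Lean document; each statement's English description precedes it below -/
import Mathlib

section
/- Let m be a nonzero complex number and u a complex number. Let G = [[m, 1], [0, m⁻¹]] and H = [[m, 0], [u, m⁻¹]] be 2×2 complex matrices. Then G·H·G = H·G·H if and only if u + m² − 1 + m⁻² = 0 (the Riley polynomial condition of the trefoil knot). -/
/-! The diagonal entries of `GHG` and `HGH` always agree, and the two off-diagonal
equations are `c = a b` and `u c = u a b` with `c = a² + u + b²`; so the braid relation
is the single equation `u + a² - a b + b² = 0`, which for `a = m`, `b = m⁻¹` is the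
Riley condition. -/

theorem Matrix.braid_relation_fin_two_iff {R : Type*} [CommRing R] (a b u : R) :
    !![a, 1; 0, b] * !![a, 0; u, b] * !![a, 1; 0, b] =
        !![a, 0; u, b] * !![a, 1; 0, b] * !![a, 0; u, b] ↔
      u + a ^ 2 - a * b + b ^ 2 = 0 := by
  simp only [Matrix.mul_fin_two, ← Matrix.ext_iff, Fin.forall_fin_two, Matrix.of_apply,
    Matrix.cons_val', Matrix.cons_val_zero, Matrix.cons_val_one, Matrix.empty_val',
    Matrix.cons_val_fin_one]
  constructor
  · rintro ⟨⟨-, h01⟩, -⟩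
    linear_combination h01
  · intro h
    exact ⟨⟨by ring, by linear_combination h⟩, by linear_combination (-u) * h, by ring⟩

/-- Riley polynomial condition for the trefoil: for `G = [[m,1],[0,m⁻¹]]` and
`H = [[m,0],[u,m⁻¹]]`, the braid relation `GHG = HGH` holds iff
`u + m² − 1 + m⁻² = 0`. -/
theorem rileyTrefoil (m u : ℂ) (hm : m ≠ 0)
    (G H : Matrix (Fin 2) (Fin 2) ℂ)
    (hG : G = !![m, 1; 0, m⁻¹]) (hH : H = !![m, 0; u, m⁻¹]) :
    G * H * G = H * G * H ↔ u + m ^ 2 - 1 + (m ^ 2)⁻¹ = 0 := by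
  rw [hG, hH, Matrix.braid_relation_fin_two_iff, mul_inv_cancel₀ hm, inv_pow]
end

section
/- Let A, B ∈ SL(2,ℂ) satisfy A·B·A⁻¹ = B⁻¹. Then either B = I, or B = −I, or all three of the following hold: tr(A) = 0, tr(A·B) = 0, and A² = −I. -/
/-- Cayley–Hamilton for a 2×2 matrix of determinant 1. -/
lemma ch_det_one (M : Matrix (Fin 2) (Fin 2) ℂ) (hd : M.det = 1) :
    M * M = M.trace • M - 1 := by
  rw [Matrix.det_fin_two] at hd
  ext i j
  fin_cases i <;> fin_cases j <;>
    simp [Matrix.mul_apply, Fin.sum_univ_two, Matrix.trace_fin_two,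
      Matrix.one_apply] <;>
    first | ring1 | linear_combination -hd

/-- Representations of the Klein bottle group into `SL(2,ℂ)`: if `ABA⁻¹ = B⁻¹`,
then `B = I`, or `B = −I`, or `tr A = 0`, `tr (AB) = 0` and `A² = −I`. -/
theorem klein_bottle_rep (A B : Matrix.SpecialLinearGroup (Fin 2) ℂ)
    (h : A * B * A⁻¹ = B⁻¹) :
    (↑B : Matrix (Fin 2) (Fin 2) ℂ) = 1 ∨
    (↑B : Matrix (Fin 2) (Fin 2) ℂ) = -1 ∨
    (Matrix.trace (↑A : Matrix (Fin 2) (Fin 2) ℂ) = 0 ∧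
      Matrix.trace (↑(A * B) : Matrix (Fin 2) (Fin 2) ℂ) = 0 ∧
      (↑(A ^ 2) : Matrix (Fin 2) (Fin 2) ℂ) = -1) := by
  set a : Matrix (Fin 2) (Fin 2) ℂ := ↑A with ha
  set b : Matrix (Fin 2) (Fin 2) ℂ := ↑B with hb
  -- group identity B A B = A
  have hg : B * A * B = A := by
    calc B * A * B = B * (A * B * A⁻¹) * A := by group
    _ = B * B⁻¹ * A := by rw [h]
    _ = A := by group
  have hg' : b * a * b = a := by
    have := congrArg (fun X : Matrix.SpecialLinearGroup (Fin 2) ℂ =>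
      (↑X : Matrix (Fin 2) (Fin 2) ℂ)) hg
    simpa [ha, hb] using this
  have hda : a.det = 1 := A.2
  have hdb : b.det = 1 := B.2
  have hdab : (a * b).det = 1 := by rw [Matrix.det_mul, hda, hdb, one_mul]
  set t : ℂ := a.trace with ht
  set s : ℂ := (a * b).trace with hs
  -- (AB)² = A²
  have key : (a * b) * (a * b) = a * a := by
    calc (a * b) * (a * b) = a * (b * a * b) := by noncomm_ring
    _ = a * a := by rw [hg']
  have cha : a * a = t • a - 1 := ch_det_one a hda
  have chab : (a * b) * (a * b) = s • (a * b) - 1 := ch_det_one (a * b) hdab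
  have e1 : t • a = s • (a * b) := by
    have := key
    rw [cha, chab] at this
    linear_combination (norm := abel) -this
  -- traces: t² = s²
  have e2 : t * t = s * s := by
    have := congrArg Matrix.trace e1
    simpa [Matrix.trace_smul, ← ht, ← hs, smul_eq_mul] using this
  -- multiply e1 on the left by A⁻¹
  have hia : (↑(A⁻¹) : Matrix (Fin 2) (Fin 2) ℂ) * a = 1 := by
    rw [ha, ← Matrix.SpecialLinearGroup.coe_mul, inv_mul_cancel,
      Matrix.SpecialLinearGroup.coe_one]
  have e3 : t • (1 : Matrix (Fin 2) (Fin 2) ℂ) = s • b := by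
    have := congrArg (fun M => (↑(A⁻¹) : Matrix (Fin 2) (Fin 2) ℂ) * M) e1
    simp only [Matrix.mul_smul, ← Matrix.mul_assoc, hia, Matrix.one_mul] at this
    exact this
  by_cases hT : t = 0
  · -- third case
    have hS : s = 0 := by
      have : s * s = 0 := by rw [← e2, hT, mul_zero]
      exact mul_self_eq_zero.mp this
    refine Or.inr (Or.inr ⟨hT, by rw [Matrix.SpecialLinearGroup.coe_mul, ← ha, ← hb, ← hs]; exact hS, ?_⟩)
    have : (↑(A ^ 2) : Matrix (Fin 2) (Fin 2) ℂ) = a * a := by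
      rw [sq, Matrix.SpecialLinearGroup.coe_mul, ha]
    rw [this, cha, hT, zero_smul, zero_sub]
  · -- B = ±I
    have hS : s ≠ 0 := by
      intro hs0
      apply hT
      have := congrArg Matrix.trace e3
      simp [Matrix.trace_smul, hs0, Matrix.trace_one, smul_eq_mul] at this
      simpa using this
    have hts : t = s ∨ t = -s := by
      have : (t - s) * (t + s) = 0 := by linear_combination e2
      rcases mul_eq_zero.mp this with h1 | h1
      · left; exact sub_eq_zero.mp h1
      · right; linear_combination h1
    rcases hts with h1 | h1
    · left
      rw [h1] at e3
      exact (smul_right_injective _ hS e3.symm)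
    · right; left
      rw [h1, neg_smul] at e3
      have : s • (-1 : Matrix (Fin 2) (Fin 2) ℂ) = s • b := by
        rw [smul_neg, e3]
      exact (smul_right_injective _ hS this.symm)
end

section
/- Let A, B ∈ SL(2,ℂ) satisfy A·B·A⁻¹ = B⁻¹ and B ≠ ±I. Then there exists P ∈ SL(2,ℂ) such that, after conjugating both A and B by P, exactly one of the following normal forms holds: (2) P·B·P⁻¹ = ε₁·[[λ, 0], [0, λ⁻¹]] for some sign ε₁ ∈ {1,−1} and some complex number λ with λ² ≠ 1, and P·A·P⁻¹ = ε₂·[[0, 1], [−1, 0]] for some sign ε₂ ∈ {1,−1}; or (3) P·B·P⁻¹ = ε₁·[[1, 1], [0, 1]] for some sign ε₁ ∈ {1,−1}, and P·A·P⁻¹ = ε₂·[[i, 0], [0, −i]] for some sign ε₂ ∈ {1,−1}. -/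
/-!
A non-central `B ∈ SL(2, K)`, `K` algebraically closed, is conjugate to the companion matrix
`[0, 1; -1, t]` of its trace `t`: if the row vector `r` is not a left eigenvector of `B`, the
basis `r, r B` does it. Hence `B` is conjugate to `diag(λ, λ⁻¹)`, where `λ + λ⁻¹ = t`, when
`t ≠ ±2`, and to `±[1, 1; 0, 1]` when `t = ±2`. In either normal form, `A B = B⁻¹ A` forces `A`
to be antidiagonal, resp. upper triangular of trace zero, and one more conjugation that fixes
`B` (by a diagonal, resp. unipotent, matrix) brings `A` into normal form.
-/

namespace Matrix

section Field

variable {K : Type*} [Field K]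

theorem exists_det_of_vecMul_ne_zero {B : Matrix (Fin 2) (Fin 2) K}
    (hB : B ∉ Set.range (scalar (Fin 2))) : ∃ r : Fin 2 → K, (of ![r, r ᵥ* B]).det ≠ 0 := by
  -- the determinant is the quadratic form `B₀₁ x² + (B₁₁ - B₀₀) x y - B₁₀ y²` in `r = (x, y)`
  by_contra! H
  have h01 := H ![1, 0]
  have h10 := H ![0, 1]
  have h11 := H ![1, 1]
  simp only [det_fin_two, of_apply, cons_val', cons_val_zero, cons_val_one, cons_val_fin_one,
    vecMul, dotProduct, Fin.sum_univ_two, one_mul, zero_mul, add_zero, sub_zero, zero_add, zero_sub,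
    neg_eq_zero] at h01 h10 h11
  have h11' : B 1 1 = B 0 0 := by linear_combination h11 - h01 + h10
  refine hB ⟨B 0 0, ?_⟩
  ext i j
  fin_cases i <;> fin_cases j <;> simp [h01, h10, h11']

theorem diag_eq_zero_of_mul_diagonal_eq {a : Matrix (Fin 2) (Fin 2) K} {l μ : K} (hlμ : l ≠ μ)
    (h : a * !![l, 0; 0, μ] = !![μ, 0; 0, l] * a) : a 0 0 = 0 ∧ a 1 1 = 0 := by
  have h00 := congrFun (congrFun h 0) 0
  have h11 := congrFun (congrFun h 1) 1
  simp only [mul_apply, of_apply, cons_val', cons_val_zero, cons_val_one, cons_val_fin_one,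
    Fin.sum_univ_two, mul_zero, zero_mul, add_zero, zero_add] at h00 h11
  have hsub : l - μ ≠ 0 := sub_ne_zero.mpr hlμ
  exact ⟨(mul_eq_zero.mp (by linear_combination h00 : a 0 0 * (l - μ) = 0)).resolve_right hsub,
    (mul_eq_zero.mp (by linear_combination -h11 : a 1 1 * (l - μ) = 0)).resolve_right hsub⟩

theorem upperTriangular_of_mul_unipotent_eq {a : Matrix (Fin 2) (Fin 2) K}
    (h : a * !![1, 1; 0, 1] = !![1, -1; 0, 1] * a) : a 1 0 = 0 ∧ a 1 1 = -a 0 0 := by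
  have h00 := congrFun (congrFun h 0) 0
  have h01 := congrFun (congrFun h 0) 1
  simp only [mul_apply, of_apply, cons_val', cons_val_zero, cons_val_one, cons_val_fin_one,
    Fin.sum_univ_two, mul_one, one_mul, mul_zero, add_zero, neg_mul] at h00 h01
  exact ⟨by linear_combination h00, by linear_combination h01⟩

theorem smul_diagonal_ne_smul_unipotent {c l μ ε : K} (hε : ε ≠ 0) :
    (c • !![l, 0; 0, μ] : Matrix (Fin 2) (Fin 2) K) ≠ ε • !![1, 1; 0, 1] :=
  fun h => hε (by simpa using (congrFun (congrFun h 0) 1).symm)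

end Field

namespace SpecialLinearGroup

section General

variable {n K : Type*} [Fintype n] [DecidableEq n] [Field K]

theorem coe_conj_eq_iff (P X : SpecialLinearGroup n K) (D : Matrix n n K) :
    ↑(P * X * P⁻¹) = D ↔ (P : Matrix n n K) * X = D * P := by
  have hP : IsUnit (P : Matrix n n K) := (isUnit_iff_isUnit_det _).mpr (by simp)
  rw [← hP.mul_left_inj, ← coe_mul, inv_mul_cancel_right, coe_mul]

theorem exists_conj_eq_of_mul_eq [Nonempty n] [IsAlgClosed K] (X : SpecialLinearGroup n K)
    {M D : Matrix n n K} (hM : M.det ≠ 0) (h : M * X = D * M) :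
    ∃ P : SpecialLinearGroup n K, ↑(P * X * P⁻¹) = D := by
  -- rescaling `M` to determinant one changes neither the conjugation nor the relation `h`
  obtain ⟨s, hs⟩ := IsAlgClosed.exists_pow_nat_eq M.det⁻¹ (Fintype.card_pos (α := n))
  let P : SpecialLinearGroup n K := ⟨s • M, by rw [det_smul, hs, inv_mul_cancel₀ hM]⟩
  refine ⟨P, (coe_conj_eq_iff P X D).mpr ?_⟩
  simp [P, h]

end General

variable {K : Type*} [Field K]

theorem coe_notMem_range_scalar {X : SpecialLinearGroup (Fin 2) K}
    (hX1 : (X : Matrix (Fin 2) (Fin 2) K) ≠ 1) (hX2 : (X : Matrix (Fin 2) (Fin 2) K) ≠ -1) :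
    (X : Matrix (Fin 2) (Fin 2) K) ∉ Set.range (scalar (Fin 2)) := by
  rintro ⟨c, hc⟩
  have hc2 : c ^ 2 = 1 := by simpa [← hc, sq] using X.2
  rcases sq_eq_one_iff.mp hc2 with rfl | rfl
  · exact hX1 (by rw [← hc, map_one])
  · exact hX2 (by rw [← hc, map_neg, map_one])

theorem exists_conj_eq_companion [IsAlgClosed K] (X : SpecialLinearGroup (Fin 2) K)
    (hX : (X : Matrix (Fin 2) (Fin 2) K) ∉ Set.range (scalar (Fin 2))) :
    ∃ P : SpecialLinearGroup (Fin 2) K,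
      ↑(P * X * P⁻¹) = !![0, 1; -1, (X : Matrix (Fin 2) (Fin 2) K).trace] := by
  obtain ⟨r, hr⟩ := exists_det_of_vecMul_ne_zero hX
  refine exists_conj_eq_of_mul_eq X hr ?_
  -- the second row is Cayley–Hamilton `r X² = t (r X) - r`
  have hdet : (X : Matrix (Fin 2) (Fin 2) K).det = 1 := X.2
  rw [det_fin_two] at hdet
  ext i j
  fin_cases i <;> fin_cases j <;>
    simp [mul_apply, vecMul, dotProduct, Fin.sum_univ_two, trace_fin_two]
  · linear_combination (-r 0) * hdet
  · linear_combination (-r 1) * hdet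

theorem exists_conj_eq_of_trace_eq [IsAlgClosed K] {X Y : SpecialLinearGroup (Fin 2) K}
    (hX : (X : Matrix (Fin 2) (Fin 2) K) ∉ Set.range (scalar (Fin 2)))
    (hY : (Y : Matrix (Fin 2) (Fin 2) K) ∉ Set.range (scalar (Fin 2)))
    (htr : (X : Matrix (Fin 2) (Fin 2) K).trace = (Y : Matrix (Fin 2) (Fin 2) K).trace) :
    ∃ P : SpecialLinearGroup (Fin 2) K, P * X * P⁻¹ = Y := by
  obtain ⟨P, hP⟩ := exists_conj_eq_companion X hX
  obtain ⟨Q, hQ⟩ := exists_conj_eq_companion Y hY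
  have hPQ : P * X * P⁻¹ = Q * Y * Q⁻¹ := Subtype.ext (by rw [hP, hQ, htr])
  refine ⟨Q⁻¹ * P, ?_⟩
  rw [show Q⁻¹ * P * X * (Q⁻¹ * P)⁻¹ = Q⁻¹ * (P * X * P⁻¹) * Q by group, hPQ]
  group

theorem exists_conj_eq_diagonal_or_unipotent [IsAlgClosed K] (X : SpecialLinearGroup (Fin 2) K)
    (hX : (X : Matrix (Fin 2) (Fin 2) K) ∉ Set.range (scalar (Fin 2))) :
    ∃ P : SpecialLinearGroup (Fin 2) K,
      (∃ l : K, l ^ 2 ≠ 1 ∧ (↑(P * X * P⁻¹) : Matrix (Fin 2) (Fin 2) K) = !![l, 0; 0, l⁻¹]) ∨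
      ∃ ε : K, (ε = 1 ∨ ε = -1) ∧
        (↑(P * X * P⁻¹) : Matrix (Fin 2) (Fin 2) K) = ε • !![1, 1; 0, 1] := by
  obtain ⟨l, hl⟩ := IsAlgClosed.exists_root
    (Polynomial.X ^ 2 - Polynomial.C (X : Matrix (Fin 2) (Fin 2) K).trace * Polynomial.X + 1)
    (by rw [show Polynomial.degree _ = 2 by compute_degree!]; exact two_ne_zero)
  simp only [Polynomial.IsRoot, Polynomial.eval_add, Polynomial.eval_sub, Polynomial.eval_pow,
    Polynomial.eval_mul, Polynomial.eval_C, Polynomial.eval_X, Polynomial.eval_one] at hl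
  have hl0 : l ≠ 0 := by rintro rfl; simp at hl
  have ht : (X : Matrix (Fin 2) (Fin 2) K).trace = l + l⁻¹ := by
    field_simp
    linear_combination -hl
  by_cases hl2 : l ^ 2 = 1
  · have hll : l⁻¹ = l := inv_eq_of_mul_eq_one_right (by rwa [← sq])
    let Y : SpecialLinearGroup (Fin 2) K := ⟨l • !![1, 1; 0, 1], by simp [det_fin_two, ← sq, hl2]⟩
    have hY : (Y : Matrix (Fin 2) (Fin 2) K) ∉ Set.range (scalar (Fin 2)) := by
      rintro ⟨c, hc⟩
      exact hl0 (by simpa [Y] using (congrFun (congrFun hc 0) 1).symm)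
    obtain ⟨P, hP⟩ := exists_conj_eq_of_trace_eq hX hY (by rw [ht, hll]; simp [Y, trace_fin_two])
    exact ⟨P, .inr ⟨l, sq_eq_one_iff.mp hl2, by rw [hP]⟩⟩
  · let Y : SpecialLinearGroup (Fin 2) K := ⟨!![l, 0; 0, l⁻¹], by simp [det_fin_two, hl0]⟩
    have hY : (Y : Matrix (Fin 2) (Fin 2) K) ∉ Set.range (scalar (Fin 2)) := by
      rintro ⟨c, hc⟩
      have h0 := congrFun (congrFun hc 0) 0
      have h1 := congrFun (congrFun hc 1) 1
      simp only [Y, scalar_apply, diagonal_apply_eq, of_apply, cons_val', cons_val_zero,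
        cons_val_one, empty_val', cons_val_fin_one] at h0 h1
      have hinv : l⁻¹ = l := h1.symm.trans h0
      exact hl2 (by rw [sq]; nth_rewrite 2 [← hinv]; exact mul_inv_cancel₀ hl0)
    obtain ⟨P, hP⟩ := exists_conj_eq_of_trace_eq hX hY (by rw [ht]; simp [Y, trace_fin_two])
    exact ⟨P, .inl ⟨l, hl2, by rw [hP]⟩⟩

theorem coe_mul_eq_adjugate_mul_of_conj_eq_inv {A B : SpecialLinearGroup (Fin 2) K}
    (h : A * B * A⁻¹ = B⁻¹) :
    (A : Matrix (Fin 2) (Fin 2) K) * B = adjugate (B : Matrix (Fin 2) (Fin 2) K) * A := by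
  rw [← coe_inv, ← coe_mul, ← coe_mul, ← mul_inv_eq_iff_eq_mul.mp h]

theorem exists_conj_antidiagonal_of_diagonal [IsAlgClosed K] {A B : SpecialLinearGroup (Fin 2) K}
    (h : A * B * A⁻¹ = B⁻¹) {l : K} (hl : l ^ 2 ≠ 1)
    (hB : (B : Matrix (Fin 2) (Fin 2) K) = !![l, 0; 0, l⁻¹]) :
    ∃ Q : SpecialLinearGroup (Fin 2) K, Q * B * Q⁻¹ = B ∧
      (↑(Q * A * Q⁻¹) : Matrix (Fin 2) (Fin 2) K) = !![0, 1; -1, 0] := by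
  have hl0 : l ≠ 0 := by rintro rfl; simpa [hB] using B.2
  have hll : l ≠ l⁻¹ := fun e => hl (by rw [sq]; nth_rewrite 2 [e]; exact mul_inv_cancel₀ hl0)
  have hrel := coe_mul_eq_adjugate_mul_of_conj_eq_inv h
  rw [hB, adjugate_fin_two_of, neg_zero] at hrel
  obtain ⟨ha00, ha11⟩ := diag_eq_zero_of_mul_diagonal_eq hll hrel
  obtain ⟨b, c, hA⟩ : ∃ b c : K, (A : Matrix (Fin 2) (Fin 2) K) = !![0, b; c, 0] :=
    ⟨_, _, by rw [eta_fin_two (A : Matrix (Fin 2) (Fin 2) K), ha00, ha11]⟩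
  have hdet : -(b * c) = 1 := by simpa [hA, det_fin_two] using A.2
  have hb : b ≠ 0 := by rintro rfl; simp at hdet
  -- conjugating by `[s, 0; 0, s⁻¹]` fixes `B` and turns `b` into `s ^ 2 * b`
  obtain ⟨s, hs⟩ := IsAlgClosed.exists_pow_nat_eq b⁻¹ two_pos
  have hs0 : s ≠ 0 := by rintro rfl; exact hb (by simpa using hs.symm)
  have hsb : s ^ 2 * b = 1 := by rw [hs, inv_mul_cancel₀ hb]
  let Q : SpecialLinearGroup (Fin 2) K := ⟨!![s, 0; 0, s⁻¹], by simp [det_fin_two, hs0]⟩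
  refine ⟨Q, Subtype.ext ((coe_conj_eq_iff Q B _).mpr ?_), (coe_conj_eq_iff Q A _).mpr ?_⟩
  · rw [hB]
    ext i j
    fin_cases i <;> fin_cases j <;> simp [Q, mul_comm]
  · rw [hA]
    ext i j
    fin_cases i <;> fin_cases j <;> simp [Q] <;> field_simp
    · linear_combination hsb
    · linear_combination -c * hsb - s ^ 2 * hdet

theorem exists_conj_diagonal_of_unipotent [NeZero (2 : K)] {A B : SpecialLinearGroup (Fin 2) K}
    (h : A * B * A⁻¹ = B⁻¹) {ε : K} (hB : (B : Matrix (Fin 2) (Fin 2) K) = ε • !![1, 1; 0, 1])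
    {i : K} (hi : i ^ 2 = -1) :
    ∃ Q : SpecialLinearGroup (Fin 2) K, Q * B * Q⁻¹ = B ∧ ∃ ε₂ : K, (ε₂ = 1 ∨ ε₂ = -1) ∧
      (↑(Q * A * Q⁻¹) : Matrix (Fin 2) (Fin 2) K) = ε₂ • !![i, 0; 0, -i] := by
  have hε : ε ≠ 0 := by rintro rfl; simpa [hB] using B.2
  have hrel := coe_mul_eq_adjugate_mul_of_conj_eq_inv h
  rw [hB, adjugate_smul, adjugate_fin_two_of, Matrix.mul_smul, Matrix.smul_mul] at hrel
  simp only [Fintype.card_fin, Nat.add_one_sub_one, pow_one, neg_zero] at hrel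
  obtain ⟨ha10, ha11⟩ := upperTriangular_of_mul_unipotent_eq (smul_right_injective _ hε hrel)
  obtain ⟨a, b, hA⟩ : ∃ a b : K, (A : Matrix (Fin 2) (Fin 2) K) = !![a, b; 0, -a] :=
    ⟨_, _, by rw [eta_fin_two (A : Matrix (Fin 2) (Fin 2) K), ha10, ha11]⟩
  have hdet : a * -a = 1 := by simpa [hA, det_fin_two] using A.2
  have ha0 : a ≠ 0 := by rintro rfl; simp at hdet
  -- conjugating by `[1, x; 0, 1]` fixes `B` and turns `b` into `b - 2 a x`
  let Q : SpecialLinearGroup (Fin 2) K := ⟨!![1, b / (2 * a); 0, 1], by simp [det_fin_two]⟩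
  have hQA : (↑(Q * A * Q⁻¹) : Matrix (Fin 2) (Fin 2) K) = !![a, 0; 0, -a] := by
    rw [coe_conj_eq_iff, hA]
    ext i j
    fin_cases i <;> fin_cases j <;> simp [Q]
    field_simp
    ring
  refine ⟨Q, Subtype.ext ((coe_conj_eq_iff Q B _).mpr ?_), ?_⟩
  · rw [hB]
    ext i j
    fin_cases i <;> fin_cases j <;> simp [Q]
    ring
  rcases sq_eq_sq_iff_eq_or_eq_neg.mp (show a ^ 2 = i ^ 2 by linear_combination -hdet - hi)
    with e | e
  · exact ⟨1, .inl rfl, by rw [hQA, e, one_smul]⟩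
  · exact ⟨-1, .inr rfl, by rw [hQA, e]; ext i j; fin_cases i <;> fin_cases j <;> simp⟩

end SpecialLinearGroup

end Matrix

open Matrix SpecialLinearGroup

/-- Normal forms for Klein bottle representations: if `ABA⁻¹ = B⁻¹` and `B ≠ ±I`,
then there is `P ∈ SL(2,ℂ)` conjugating `(A,B)` to exactly one of the normal forms
(2) `B ∼ ±[[λ,0],[0,λ⁻¹]]` (`λ² ≠ 1`), `A ∼ ±[[0,1],[−1,0]]`, or
(3) `B ∼ ±[[1,1],[0,1]]`, `A ∼ ±[[i,0],[0,−i]]`. -/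
theorem klein_bottle_normal_form (A B : Matrix.SpecialLinearGroup (Fin 2) ℂ)
    (h : A * B * A⁻¹ = B⁻¹)
    (hB1 : (↑B : Matrix (Fin 2) (Fin 2) ℂ) ≠ 1)
    (hB2 : (↑B : Matrix (Fin 2) (Fin 2) ℂ) ≠ -1) :
    ∃ P : Matrix.SpecialLinearGroup (Fin 2) ℂ,
      Xor'
        (∃ ε₁ l : ℂ, (ε₁ = 1 ∨ ε₁ = -1) ∧ l ^ 2 ≠ 1 ∧
          (↑(P * B * P⁻¹) : Matrix (Fin 2) (Fin 2) ℂ) = ε₁ • !![l, 0; 0, l⁻¹] ∧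
          ∃ ε₂ : ℂ, (ε₂ = 1 ∨ ε₂ = -1) ∧
            (↑(P * A * P⁻¹) : Matrix (Fin 2) (Fin 2) ℂ) = ε₂ • !![0, 1; -1, 0])
        (∃ ε₁ : ℂ, (ε₁ = 1 ∨ ε₁ = -1) ∧
          (↑(P * B * P⁻¹) : Matrix (Fin 2) (Fin 2) ℂ) = ε₁ • !![1, 1; 0, 1] ∧
          ∃ ε₂ : ℂ, (ε₂ = 1 ∨ ε₂ = -1) ∧
            (↑(P * A * P⁻¹) : Matrix (Fin 2) (Fin 2) ℂ) =
              ε₂ • !![Complex.I, 0; 0, -Complex.I]) := by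
  have hne : ∀ ε : ℂ, ε = 1 ∨ ε = -1 → ε ≠ 0 := by rintro _ (rfl | rfl) <;> norm_num
  obtain ⟨P, hPB⟩ := exists_conj_eq_diagonal_or_unipotent B (coe_notMem_range_scalar hB1 hB2)
  have hrel : P * A * P⁻¹ * (P * B * P⁻¹) * (P * A * P⁻¹)⁻¹ = (P * B * P⁻¹)⁻¹ := by
    simpa only [map_mul, map_inv, MulAut.conj_apply] using congrArg (MulAut.conj P) h
  have hconj (Q X : SpecialLinearGroup (Fin 2) ℂ) :
      Q * P * X * (Q * P)⁻¹ = Q * (P * X * P⁻¹) * Q⁻¹ := by group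
  rcases hPB with ⟨l, hl, hPB⟩ | ⟨ε₁, hε₁, hPB⟩
  · obtain ⟨Q, hQB, hQA⟩ := exists_conj_antidiagonal_of_diagonal hrel hl hPB
    have hB : (↑(Q * P * B * (Q * P)⁻¹) : Matrix (Fin 2) (Fin 2) ℂ) =
        (1 : ℂ) • !![l, 0; 0, l⁻¹] := by
      rw [hconj, hQB, hPB, one_smul]
    refine ⟨Q * P, .inl ⟨⟨1, l, .inl rfl, hl, hB, 1, .inl rfl, by rw [hconj, hQA, one_smul]⟩, ?_⟩⟩
    rintro ⟨ε, hε, hB', -⟩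
    exact smul_diagonal_ne_smul_unipotent (hne ε hε) (hB.symm.trans hB')
  · obtain ⟨Q, hQB, ε₂, hε₂, hQA⟩ := exists_conj_diagonal_of_unipotent hrel hPB Complex.I_sq
    have hB : (↑(Q * P * B * (Q * P)⁻¹) : Matrix (Fin 2) (Fin 2) ℂ) = ε₁ • !![1, 1; 0, 1] := by
      rw [hconj, hQB, hPB]
    refine ⟨Q * P, .inr ⟨⟨ε₁, hε₁, hB, ε₂, hε₂, by rw [hconj, hQA]⟩, ?_⟩⟩
    rintro ⟨ε, l, -, -, hB', -⟩
    exact smul_diagonal_ne_smul_unipotent (hne ε₁ hε₁) (hB'.symm.trans hB)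
end

section
/- Let G₁, G₂, G₃, A ∈ SL(2,ℂ) and define H₁ = A·G₃⁻¹·A⁻¹, H₂ = A·G₂⁻¹·A⁻¹, H₃ = A·G₁⁻¹·A⁻¹. If H₁·H₂·H₃ = G₁·G₂·G₃ and G₁·G₂·G₃ ≠ ±I, then tr(A) = 0 and A² = −I. -/
/-- If `Hᵢ = A G₄₋ᵢ⁻¹ A⁻¹`, `H₁H₂H₃ = G₁G₂G₃` and `G₁G₂G₃ ≠ ±I`, then
`tr A = 0` and `A² = −I`. -/
theorem trace_zero_of_inverting_conjugation
    (G₁ G₂ G₃ A H₁ H₂ H₃ : Matrix.SpecialLinearGroup (Fin 2) ℂ)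
    (h1 : H₁ = A * G₃⁻¹ * A⁻¹) (h2 : H₂ = A * G₂⁻¹ * A⁻¹) (h3 : H₃ = A * G₁⁻¹ * A⁻¹)
    (hprod : H₁ * H₂ * H₃ = G₁ * G₂ * G₃)
    (hne1 : (↑(G₁ * G₂ * G₃) : Matrix (Fin 2) (Fin 2) ℂ) ≠ 1)
    (hne2 : (↑(G₁ * G₂ * G₃) : Matrix (Fin 2) (Fin 2) ℂ) ≠ -1) :
    Matrix.trace (↑A : Matrix (Fin 2) (Fin 2) ℂ) = 0 ∧
      (↑(A ^ 2) : Matrix (Fin 2) (Fin 2) ℂ) = -1 := by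
  set P := G₁*G₂*G₃ with hP
  have key : A * P⁻¹ = P * A := by
    have h : A * P⁻¹ * A⁻¹ = P := by
      conv_rhs => rw [← hprod, h1, h2, h3]
      rw [hP]
      simp [mul_inv_rev, mul_assoc]
    calc A * P⁻¹ = (A * P⁻¹ * A⁻¹) * A := by group
    _ = P * A := by rw [h]
  set p : Matrix (Fin 2) (Fin 2) ℂ := ↑P with hp
  set a : Matrix (Fin 2) (Fin 2) ℂ := ↑A with ha
  have keyM : a * (Matrix.adjugate p) = p * a := by
    have := congrArg (fun g : Matrix.SpecialLinearGroup (Fin 2) ℂ => (↑g : Matrix (Fin 2) (Fin 2) ℂ)) key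
    simpa [Matrix.SpecialLinearGroup.coe_inv] using this
  have hdeta : a.det = 1 := A.prop
  have hdetp : p.det = 1 := P.prop
  rw [Matrix.det_fin_two] at hdeta hdetp
  rw [Matrix.adjugate_fin_two] at keyM
  have e00 := congrFun (congrFun keyM 0) 0
  have e01 := congrFun (congrFun keyM 0) 1
  have e10 := congrFun (congrFun keyM 1) 0
  have e11 := congrFun (congrFun keyM 1) 1
  simp [Matrix.mul_apply, Fin.sum_univ_two] at e00 e01 e10 e11
  have htr : a 0 0 + a 1 1 = 0 := by
    by_contra h
    have hy0 : p 0 1 = 0 := by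
      have hy : p 0 1 * (a 0 0 + a 1 1) = 0 := by linear_combination -e01
      exact (mul_eq_zero.mp hy).resolve_right h
    have hz0 : p 1 0 = 0 := by
      have hz : p 1 0 * (a 0 0 + a 1 1) = 0 := by linear_combination -e10
      exact (mul_eq_zero.mp hz).resolve_right h
    have hxw : p 0 0 * p 1 1 = 1 := by linear_combination hdetp + p 1 0 * hy0
    by_cases hxe : p 0 0 = p 1 1
    · have h2 : (p 0 0 - 1) * (p 0 0 + 1) = 0 := by
        linear_combination hxw + p 0 0 * hxe
      rcases mul_eq_zero.mp h2 with h3 | h3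
      · have hx1 : p 0 0 = 1 := by linear_combination h3
        have hw1 : p 1 1 = 1 := by rw [← hxe]; exact hx1
        exact hne1 (by ext i j; fin_cases i <;> fin_cases j <;>
          simp [Matrix.one_apply, hy0, hz0, hx1, hw1])
      · have hx1 : p 0 0 = -1 := by linear_combination h3
        have hw1 : p 1 1 = -1 := by rw [← hxe]; exact hx1
        exact hne2 (by ext i j; fin_cases i <;> fin_cases j <;>
          simp [Matrix.neg_apply, Matrix.one_apply, hy0, hz0, hx1, hw1])
    · have hd : p 1 1 - p 0 0 ≠ 0 := sub_ne_zero.mpr (Ne.symm hxe)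
      have ha0 : a 0 0 = 0 := by
        have : a 0 0 * (p 1 1 - p 0 0) = 0 := by
          linear_combination e00 + a 0 1 * hz0 + a 1 0 * hy0
        exact (mul_eq_zero.mp this).resolve_right hd
      have ha1 : a 1 1 = 0 := by
        have : a 1 1 * (p 1 1 - p 0 0) = 0 := by
          linear_combination -e11 - a 1 0 * hy0 - a 0 1 * hz0
        exact (mul_eq_zero.mp this).resolve_right hd
      exact h (by rw [ha0, ha1, add_zero])
  constructor
  · rw [Matrix.trace_fin_two]; exact htr
  · have hc : (↑(A ^ 2) : Matrix (Fin 2) (Fin 2) ℂ) = a * a := by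
      simp [pow_two, ha]
    rw [hc]
    ext i j
    fin_cases i <;> fin_cases j <;>
      simp [Matrix.mul_apply, Fin.sum_univ_two, Matrix.neg_apply, Matrix.one_apply] <;>
      first
        | linear_combination a 0 0 * htr - hdeta
        | linear_combination a 1 1 * htr - hdeta
        | linear_combination a 0 1 * htr
        | linear_combination a 1 0 * htr
end

section
/- Let G₁, G₂, G₃ ∈ SL(2,ℂ) with tr(G₁) = tr(G₂) = tr(G₃) = s. Set x = tr(G₁G₂), y = tr(G₁G₃), z = tr(G₂G₃), p = tr(G₁G₂G₃), and b = s·(s + p). Then tr(G₁·G₂·G₁⁻¹·G₃) = b − z − x·y. (This is the formula for the action of the braid generator σ₁⁻¹ on trace coordinates.) -/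
open Matrix

/-- Braid action on trace coordinates. -/
theorem braid_trace_action_8 (G₁ G₂ G₃ : Matrix.SpecialLinearGroup (Fin 2) ℂ)
    (s x y z p b : ℂ)
    (hs1 : trace (↑G₁ : Matrix (Fin 2) (Fin 2) ℂ) = s)
    (hs2 : trace (↑G₂ : Matrix (Fin 2) (Fin 2) ℂ) = s)
    (hs3 : trace (↑G₃ : Matrix (Fin 2) (Fin 2) ℂ) = s)
    (hx : x = trace (↑(G₁ * G₂) : Matrix (Fin 2) (Fin 2) ℂ))
    (hy : y = trace (↑(G₁ * G₃) : Matrix (Fin 2) (Fin 2) ℂ))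
    (hz : z = trace (↑(G₂ * G₃) : Matrix (Fin 2) (Fin 2) ℂ))
    (hp : p = trace (↑(G₁ * G₂ * G₃) : Matrix (Fin 2) (Fin 2) ℂ))
    (hb : b = s * (s + p)) :
    trace (↑(G₁ * G₂ * G₁⁻¹ * G₃) : Matrix (Fin 2) (Fin 2) ℂ) = b - z - x * y := by
  have h1 : det (↑G₁ : Matrix (Fin 2) (Fin 2) ℂ) = 1 := G₁.2
  rw [Matrix.det_fin_two] at h1
  subst hs1 hx hy hz hp hb
  set A : Matrix (Fin 2) (Fin 2) ℂ := ↑G₁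
  set B : Matrix (Fin 2) (Fin 2) ℂ := ↑G₂
  set C : Matrix (Fin 2) (Fin 2) ℂ := ↑G₃
  simp only [Matrix.SpecialLinearGroup.coe_mul, Matrix.SpecialLinearGroup.coe_inv,
    Matrix.trace_fin_two, Matrix.mul_apply, Fin.sum_univ_two, Matrix.adjugate_fin_two,
    Matrix.cons_val', Matrix.cons_val_zero, Matrix.cons_val_one, Matrix.head_cons,
    Matrix.head_fin_const, Matrix.empty_val', Matrix.cons_val_fin_one, Matrix.of_apply] at *
  linear_combination
    ((A 0 0 + A 1 1) * (B 0 0 + C 0 0) - 2 * B 0 0 * C 0 0 - B 1 0 * C 0 1 - B 0 1 * C 1 0) * h1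
    + (C 1 1 + (A 0 0 * A 1 1 - A 0 1 * A 1 0) * C 0 0) * hs2
    + (A 0 0 + A 1 1 - B 0 0 + (A 0 0 * A 1 1 - A 0 1 * A 1 0) * B 0 0) * hs3
end

section
/- Let G₁, G₂, G₃ ∈ SL(2,ℂ) with tr(G₁) = tr(G₂) = tr(G₃) = s. Set x = tr(G₁G₂), y = tr(G₁G₃), z = tr(G₂G₃), p = tr(G₁G₂G₃), and b = s·(s + p). Then tr(G₁·G₃⁻¹·G₂·G₃) = b − x − y·z. (This is the formula for the action of the braid generator σ₂ on trace coordinates.) -/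
open Matrix

/-- Braid action on trace coordinates. -/
theorem braid_trace_action_9 (G₁ G₂ G₃ : Matrix.SpecialLinearGroup (Fin 2) ℂ)
    (s x y z p b : ℂ)
    (hs1 : trace (↑G₁ : Matrix (Fin 2) (Fin 2) ℂ) = s)
    (hs2 : trace (↑G₂ : Matrix (Fin 2) (Fin 2) ℂ) = s)
    (hs3 : trace (↑G₃ : Matrix (Fin 2) (Fin 2) ℂ) = s)
    (hx : x = trace (↑(G₁ * G₂) : Matrix (Fin 2) (Fin 2) ℂ))
    (hy : y = trace (↑(G₁ * G₃) : Matrix (Fin 2) (Fin 2) ℂ))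
    (hz : z = trace (↑(G₂ * G₃) : Matrix (Fin 2) (Fin 2) ℂ))
    (hp : p = trace (↑(G₁ * G₂ * G₃) : Matrix (Fin 2) (Fin 2) ℂ))
    (hb : b = s * (s + p)) :
    trace (↑(G₁ * G₃⁻¹ * G₂ * G₃) : Matrix (Fin 2) (Fin 2) ℂ) = b - x - y * z := by
  have he3 : (↑G₃ : Matrix (Fin 2) (Fin 2) ℂ) 0 0 * (↑G₃ : Matrix (Fin 2) (Fin 2) ℂ) 1 1
      - (↑G₃ : Matrix (Fin 2) (Fin 2) ℂ) 0 1 * (↑G₃ : Matrix (Fin 2) (Fin 2) ℂ) 1 0 = 1 := by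
    have := G₃.2; rwa [Matrix.det_fin_two] at this
  have m3p : (trace (↑G₃ : Matrix (Fin 2) (Fin 2) ℂ) - s)
      * (p - trace (↑(G₁ * G₂ * G₃) : Matrix (Fin 2) (Fin 2) ℂ)) = 0 := by
    rw [hs3]; ring
  have myz : (y - trace (↑(G₁ * G₃) : Matrix (Fin 2) (Fin 2) ℂ))
      * (z - trace (↑(G₂ * G₃) : Matrix (Fin 2) (Fin 2) ℂ)) = 0 := by
    rw [hy]; ring
  have m12 : (trace (↑G₁ : Matrix (Fin 2) (Fin 2) ℂ) - s)
      * (trace (↑G₂ : Matrix (Fin 2) (Fin 2) ℂ) - s) = 0 := by rw [hs1]; ring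
  have m12e : (trace (↑G₁ : Matrix (Fin 2) (Fin 2) ℂ) - s)
      * (trace (↑G₂ : Matrix (Fin 2) (Fin 2) ℂ) - s)
      * ((↑G₃ : Matrix (Fin 2) (Fin 2) ℂ) 0 0 * (↑G₃ : Matrix (Fin 2) (Fin 2) ℂ) 1 1
      - (↑G₃ : Matrix (Fin 2) (Fin 2) ℂ) 0 1 * (↑G₃ : Matrix (Fin 2) (Fin 2) ℂ) 1 0 - 1) = 0 := by
    rw [hs1]; ring
  have m1e : (trace (↑G₁ : Matrix (Fin 2) (Fin 2) ℂ) - s)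
      * ((↑G₃ : Matrix (Fin 2) (Fin 2) ℂ) 0 0 * (↑G₃ : Matrix (Fin 2) (Fin 2) ℂ) 1 1
      - (↑G₃ : Matrix (Fin 2) (Fin 2) ℂ) 0 1 * (↑G₃ : Matrix (Fin 2) (Fin 2) ℂ) 1 0 - 1) = 0 := by
    rw [hs1]; ring
  have m2e : (trace (↑G₂ : Matrix (Fin 2) (Fin 2) ℂ) - s)
      * ((↑G₃ : Matrix (Fin 2) (Fin 2) ℂ) 0 0 * (↑G₃ : Matrix (Fin 2) (Fin 2) ℂ) 1 1
      - (↑G₃ : Matrix (Fin 2) (Fin 2) ℂ) 0 1 * (↑G₃ : Matrix (Fin 2) (Fin 2) ℂ) 1 0 - 1) = 0 := by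
    rw [hs2]; ring
  have mxe : (x - trace (↑(G₁ * G₂) : Matrix (Fin 2) (Fin 2) ℂ))
      * ((↑G₃ : Matrix (Fin 2) (Fin 2) ℂ) 0 0 * (↑G₃ : Matrix (Fin 2) (Fin 2) ℂ) 1 1
      - (↑G₃ : Matrix (Fin 2) (Fin 2) ℂ) 0 1 * (↑G₃ : Matrix (Fin 2) (Fin 2) ℂ) 1 0 - 1) = 0 := by
    rw [hx]; ring
  simp only [Matrix.SpecialLinearGroup.coe_mul, Matrix.SpecialLinearGroup.coe_inv,
    Matrix.adjugate_fin_two, Matrix.trace_fin_two, Matrix.mul_apply, Fin.sum_univ_two,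
    Matrix.cons_val', Matrix.cons_val_zero, Matrix.cons_val_one, Matrix.head_cons,
    Matrix.empty_val', Matrix.cons_val_fin_one, Matrix.head_fin_const, Matrix.of_apply]
    at hs1 hs2 hs3 hx hy hz hp m3p myz m12 m12e m1e m2e mxe ⊢
  linear_combination -hb - s*hp + p*hs3 - m3p + z*hy + y*hz - myz
    + (s^2 - x)*he3 + m12e + s*m1e + s*m2e + mxe + m12 + s*hs1 + s*hs2 + hx
end

section
/- Let n be a natural number and let σ be a permutation of the set {1, …, n}. Then σ² is an n-cycle if and only if n is odd and σ is an n-cycle. -/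
/-- A permutation `σ` of `Fin n` is an `n`-cycle if it is a cycle whose support
is all of `Fin n`. -/
def IsNCycle {n : ℕ} (σ : Equiv.Perm (Fin n)) : Prop :=
  σ.IsCycle ∧ σ.support = Finset.univ

/-- `σ²` is an `n`-cycle iff `n` is odd and `σ` is an `n`-cycle. -/
theorem sq_isNCycle_iff (n : ℕ) (σ : Equiv.Perm (Fin n)) :
    IsNCycle (σ ^ 2) ↔ Odd n ∧ IsNCycle σ := by
  constructor
  · rintro ⟨hc, hs⟩
    have hsub : σ.support ⊆ (σ ^ 2).support := by
      rw [hs]; exact Finset.subset_univ _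
    have hcyc : σ.IsCycle := hc.of_pow hsub
    have hsupp : σ.support = Finset.univ :=
      Finset.eq_univ_of_forall fun x =>
        Equiv.Perm.support_pow_le σ 2 (hs ▸ Finset.mem_univ x)
    have hord : orderOf σ = n := by
      rw [hcyc.orderOf, hsupp, Finset.card_univ, Fintype.card_fin]
    have hodd : Odd n := hord ▸ (hcyc.pow_iff.mp hc).odd_of_left
    exact ⟨hodd, hcyc, hsupp⟩
  · rintro ⟨hodd, hcyc, hsupp⟩
    have hord : orderOf σ = n := by
      rw [hcyc.orderOf, hsupp, Finset.card_univ, Fintype.card_fin]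
    have hcop : Nat.Coprime 2 (orderOf σ) := by
      rw [hord]; exact hodd.coprime_two_left
    exact ⟨hcyc.pow_iff.mpr hcop,
      by rw [Equiv.Perm.support_pow_coprime hcop, hsupp]⟩
end

section
/- Let X, A ∈ SL(2,ℂ) with X ≠ I and X ≠ −I. If tr(X) = 2 or tr(X) = −2, and A commutes with X (i.e., A·X = X·A), then tr(A) = 2 or tr(A) = −2. -/
/-- If `X ∈ SL(2,ℂ)`, `X ≠ ±I`, `tr X = ±2`, and `A ∈ SL(2,ℂ)` commutes with `X`,
then `tr A = ±2`. -/
theorem trace_of_centralizer_parabolic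
    (X A : Matrix.SpecialLinearGroup (Fin 2) ℂ)
    (hX1 : (↑X : Matrix (Fin 2) (Fin 2) ℂ) ≠ 1)
    (hX2 : (↑X : Matrix (Fin 2) (Fin 2) ℂ) ≠ -1)
    (htr : Matrix.trace (↑X : Matrix (Fin 2) (Fin 2) ℂ) = 2 ∨
           Matrix.trace (↑X : Matrix (Fin 2) (Fin 2) ℂ) = -2)
    (hcomm : A * X = X * A) :
    Matrix.trace (↑A : Matrix (Fin 2) (Fin 2) ℂ) = 2 ∨
      Matrix.trace (↑A : Matrix (Fin 2) (Fin 2) ℂ) = -2 := by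
  have hc : (↑A : Matrix (Fin 2) (Fin 2) ℂ) * (↑X : Matrix (Fin 2) (Fin 2) ℂ) =
      (↑X : Matrix (Fin 2) (Fin 2) ℂ) * (↑A : Matrix (Fin 2) (Fin 2) ℂ) := by
    have := congrArg (Subtype.val) hcomm
    simpa using this
  set M : Matrix (Fin 2) (Fin 2) ℂ := ↑X with hM
  set N : Matrix (Fin 2) (Fin 2) ℂ := ↑A with hN
  have detX : M.det = 1 := X.2
  have detA : N.det = 1 := A.2
  rw [Matrix.det_fin_two] at detX detA
  have h00 := congrFun (congrFun hc 0) 0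
  have h01 := congrFun (congrFun hc 0) 1
  have h10 := congrFun (congrFun hc 1) 0
  have h11 := congrFun (congrFun hc 1) 1
  simp only [Matrix.mul_apply, Fin.sum_univ_two] at h00 h01 h10 h11
  rw [Matrix.trace_fin_two] at htr ⊢
  set a := M 0 0 with ha
  set b := M 0 1 with hb
  set c := M 1 0 with hcc
  set d := M 1 1 with hd
  set p := N 0 0 with hp
  set q := N 0 1 with hq
  set r := N 1 0 with hr
  set s := N 1 1 with hs
  -- key algebraic facts
  have hsq : (a - d)^2 = -4*(b*c) := by
    rcases htr with h | h
    · linear_combination (a + d + 2) * h - 4 * detX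
    · linear_combination (a + d - 2) * h - 4 * detX
  have e1 : q * c = b * r := by linear_combination h00
  have e2 : b * (p - s) = (a - d) * q := by linear_combination h01
  have e3 : c * (p - s) = (a - d) * r := by linear_combination -h10
  have key : (p - s)^2 + 4*(q*r) = 0 := by
    by_cases had : a - d = 0
    · have hbc : b * c = 0 := by
        linear_combination hsq / 4 - ((a - d)/4) * had
      have hbor : b ≠ 0 ∨ c ≠ 0 := by
        by_contra h
        push_neg at h
        obtain ⟨hb0, hc0⟩ := h
        rcases htr with ht | ht
        · apply hX1
          have ha1 : a = 1 := by linear_combination ht / 2 + had / 2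
          have hd1 : d = 1 := by linear_combination ht / 2 - had / 2
          rw [Matrix.eta_fin_two M, show M 0 0 = (1:ℂ) from ha1,
            show M 1 1 = (1:ℂ) from hd1, show M 0 1 = (0:ℂ) from hb0,
            show M 1 0 = (0:ℂ) from hc0]
          ext i j
          fin_cases i <;> fin_cases j <;> simp [Matrix.one_apply]
        · apply hX2
          have ha1 : a = -1 := by linear_combination ht / 2 + had / 2
          have hd1 : d = -1 := by linear_combination ht / 2 - had / 2
          rw [Matrix.eta_fin_two M, show M 0 0 = (-1:ℂ) from ha1,
            show M 1 1 = (-1:ℂ) from hd1, show M 0 1 = (0:ℂ) from hb0,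
            show M 1 0 = (0:ℂ) from hc0]
          ext i j
          fin_cases i <;> fin_cases j <;> simp [Matrix.one_apply]
      rcases hbor with hb0 | hc0
      · have hps : p - s = 0 := by
          have := e2
          rw [had, zero_mul] at this
          exact (mul_eq_zero.mp this).resolve_left hb0
        have hc0 : c = 0 := (mul_eq_zero.mp hbc).resolve_left hb0
        have hr0 : r = 0 := by
          have := e1
          rw [hc0, mul_zero] at this
          exact ((mul_eq_zero.mp this.symm).resolve_left hb0)
        rw [hps, hr0]
        ring
      · have hps : p - s = 0 := by
          have := e3
          rw [had, zero_mul] at this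
          exact (mul_eq_zero.mp this).resolve_left hc0
        have hb0 : b = 0 := by
          rcases mul_eq_zero.mp hbc with h' | h'
          · exact h'
          · exact absurd h' hc0
        have hq0 : q = 0 := by
          have := e1
          rw [hb0, zero_mul] at this
          exact (mul_eq_zero.mp this).resolve_right hc0
        rw [hps, hq0]
        ring
    · have hbc : b * c ≠ 0 := by
        intro h
        apply had
        have : (a - d)^2 = 0 := by rw [hsq, h]; ring
        exact pow_eq_zero_iff (n := 2) (by norm_num) |>.mp this
      have hmain : b * c * ((p - s)^2 + 4*(q*r)) = 0 := by
        linear_combination (c*(p - s)) * e2 + ((a - d)*q) * e3 + (q*r) * hsq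
      exact (mul_eq_zero.mp hmain).resolve_left hbc
  have h4 : (p + s - 2) * (p + s + 2) = 0 := by
    linear_combination key + 4 * detA
  rcases mul_eq_zero.mp h4 with h | h
  · left; linear_combination h
  · right; linear_combination h
end
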